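/- Let H be the linear operator H f = -f'' + q·f and U an n-dimensional H-invariant subspace of smooth functions ℝ → ℂ. Suppose L = (d/dx)ⁿ + c₁(x)(d/dx)^{n-1} + ⋯ + cₙ(x) is a monic n-th order differential operator annihilating every element of U. Then with H̃ f = -f'' + (q + 2c₁')·f, the relation H̃ ∘ L = L ∘ H holds on sufficiently differentiable functions. -/

import Mathlib

open scoped ContDiff
open Set

private lemma natle : ∀ (k : ℕ), (k : WithTop ℕ∞) ≤ ∞ := fun k => by
  exact_mod_cast le_top

private lemma smooth_itd {f : ℝ → ℂ} (hf : ContDiff ℝ ∞ f) (k : ℕ) :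
    ContDiff ℝ ∞ (iteratedDeriv k f) := by
  rw [iteratedDeriv_eq_iterate]; exact hf.iterate_deriv k

private lemma smooth_deriv {f : ℝ → ℂ} (hf : ContDiff ℝ ∞ f) : ContDiff ℝ ∞ (deriv f) :=
  (contDiff_infty_iff_deriv.mp hf).2

private lemma itd_add {f g : ℝ → ℂ} (hf : ContDiff ℝ ∞ f) (hg : ContDiff ℝ ∞ g) (k : ℕ) (x : ℝ) :
    iteratedDeriv k (fun y => f y + g y) x = iteratedDeriv k f x + iteratedDeriv k g x := by
  simp_rw [← iteratedDerivWithin_univ]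
  exact iteratedDerivWithin_add (Set.mem_univ x) uniqueDiffOn_univ
    ((hf.of_le (natle k)).contDiffWithinAt) ((hg.of_le (natle k)).contDiffWithinAt)

private lemma itd_smul {f : ℝ → ℂ} (hf : ContDiff ℝ ∞ f) (a : ℂ) (k : ℕ) (x : ℝ) :
    iteratedDeriv k (fun y => a * f y) x = a * iteratedDeriv k f x := by
  simp_rw [← iteratedDerivWithin_univ]
  have := iteratedDerivWithin_const_smul (F := ℂ) (R := ℂ) (Set.mem_univ x) uniqueDiffOn_univ a
    ((hf.of_le (natle k)).contDiffWithinAt)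
  simpa [smul_eq_mul] using this

private lemma itd_neg (f : ℝ → ℂ) (k : ℕ) (x : ℝ) :
    iteratedDeriv k (fun y => -(f y)) x = -iteratedDeriv k f x :=
  iteratedDeriv_neg k f x

private lemma itd_itd (f : ℝ → ℂ) (m k : ℕ) :
    iteratedDeriv m (iteratedDeriv k f) = iteratedDeriv (k + m) f := by
  induction m with
  | zero => simp
  | succ m ih => rw [iteratedDeriv_succ, ih, ← iteratedDeriv_succ]; rfl

private lemma itd_zero_fun (k : ℕ) : iteratedDeriv k (fun _ : ℝ => (0 : ℂ)) = fun _ => 0 := by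
  induction k with
  | zero => rfl
  | succ k ih => rw [iteratedDeriv_succ, ih]; exact funext fun y => deriv_const y (0:ℂ)

private lemma itd_sum {ι : Type*} (s : Finset ι) (F : ι → ℝ → ℂ)
    (hF : ∀ i ∈ s, ContDiff ℝ ∞ (F i)) (k : ℕ) (x : ℝ) :
    iteratedDeriv k (fun y => ∑ i ∈ s, F i y) x = ∑ i ∈ s, iteratedDeriv k (F i) x := by
  classical
  induction s using Finset.induction with
  | empty => simp [itd_zero_fun k]
  | insert a s hnot ih =>
    have hs : ContDiff ℝ ∞ (fun y => ∑ i ∈ s, F i y) :=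
      ContDiff.sum fun i hi => hF i (Finset.mem_insert_of_mem hi)
    simp only [Finset.sum_insert hnot]
    rw [itd_add (hF a (Finset.mem_insert_self a s)) hs,
      ih (fun i hi => hF i (Finset.mem_insert_of_mem hi))]

private lemma itd_sub {f g : ℝ → ℂ} (hf : ContDiff ℝ ∞ f) (hg : ContDiff ℝ ∞ g) (k : ℕ) (x : ℝ) :
    iteratedDeriv k (fun y => f y - g y) x = iteratedDeriv k f x - iteratedDeriv k g x := by
  simp only [sub_eq_add_neg]
  rw [itd_add hf hg.neg k x, itd_neg g k x]

private lemma itd2_mul {a b : ℝ → ℂ} (ha : ContDiff ℝ ∞ a) (hb : ContDiff ℝ ∞ b) (x : ℝ) :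
    iteratedDeriv 2 (fun y => a y * b y) x
      = iteratedDeriv 2 a x * b x + 2 * deriv a x * deriv b x + a x * iteratedDeriv 2 b x := by
  have hda := smooth_deriv ha
  have hdb := smooth_deriv hb
  have h1 : deriv (fun y => a y * b y) = fun y => deriv a y * b y + a y * deriv b y :=
    funext fun y => deriv_fun_mul (ha.differentiable (by simp) y) (hb.differentiable (by simp) y)
  have h2 : iteratedDeriv 2 (fun y => a y * b y) x = deriv (deriv (fun y => a y * b y)) x := by
    rw [show (2:ℕ) = 1 + 1 from rfl, iteratedDeriv_succ, iteratedDeriv_one]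
  have h2a : iteratedDeriv 2 a x = deriv (deriv a) x := by
    rw [show (2:ℕ) = 1 + 1 from rfl, iteratedDeriv_succ, iteratedDeriv_one]
  have h2b : iteratedDeriv 2 b x = deriv (deriv b) x := by
    rw [show (2:ℕ) = 1 + 1 from rfl, iteratedDeriv_succ, iteratedDeriv_one]
  rw [h2, h2a, h2b, h1]
  have d1 : ∀ y, DifferentiableAt ℝ (fun y => deriv a y * b y) y := fun y =>
    ((hda.differentiable (by simp) y).mul (hb.differentiable (by simp) y))
  have d2 : ∀ y, DifferentiableAt ℝ (fun y => a y * deriv b y) y := fun y =>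
    ((ha.differentiable (by simp) y).mul (hdb.differentiable (by simp) y))
  rw [deriv_fun_add (d1 x) (d2 x),
    deriv_fun_mul (hda.differentiable (by simp) x) (hb.differentiable (by simp) x),
    deriv_fun_mul (ha.differentiable (by simp) x) (hdb.differentiable (by simp) x)]
  ring

private lemma leibniz_exists (q : ℝ → ℂ) (hq : ContDiff ℝ ∞ q) (m : ℕ) :
    ∃ d : ℕ → ℝ → ℂ, (∀ j, ContDiff ℝ ∞ (d j)) ∧ d m = q ∧ (∀ j, m < j → d j = fun _ => 0) ∧
      ∀ g : ℝ → ℂ, ContDiff ℝ ∞ g → ∀ x,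
        iteratedDeriv m (fun y => q y * g y) x
          = ∑ j ∈ Finset.range (m+1), d j x * iteratedDeriv j g x := by
  induction m with
  | zero =>
    refine ⟨fun j => if j = 0 then q else fun _ => 0, ?_, by simp, ?_, ?_⟩
    · intro j; by_cases h : j = 0 <;> simp [h, hq, contDiff_const]
    · intro j hj; have : j ≠ 0 := by omega
      simp [this]
    · intro g hg x; simp [iteratedDeriv_zero]
  | succ m ih =>
    obtain ⟨d, hds, hdm, hd0, hsum⟩ := ih
    refine ⟨fun j x => deriv (d j) x + (if j = 0 then 0 else d (j-1) x), ?_, ?_, ?_, ?_⟩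
    · intro j
      rcases j with _ | j
      · simpa using smooth_deriv (hds 0)
      · simpa using (smooth_deriv (hds (j+1))).add (hds j)
    · funext x
      have h1 : d (m+1) = fun _ => 0 := hd0 (m+1) (Nat.lt_succ_self m)
      simp [h1, hdm]
    · intro j hj
      funext x
      rcases j with _ | j
      · omega
      · have h1 : d (j+1) = fun _ => 0 := hd0 (j+1) (by omega)
        have h2 : d j = fun _ => 0 := hd0 j (by omega)
        simp [h1, h2]
    · intro g hg x
      have hb : ∀ j y, deriv (iteratedDeriv j g) y = iteratedDeriv (j+1) g y := by
        intro j y; rw [← iteratedDeriv_succ]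
      rw [iteratedDeriv_succ]
      have hit : iteratedDeriv m (fun y => q y * g y)
          = fun x => ∑ j ∈ Finset.range (m+1), d j x * iteratedDeriv j g x :=
        funext (hsum g hg)
      rw [hit]
      have hdiff : ∀ j ∈ Finset.range (m+1),
          DifferentiableAt ℝ (fun x => d j x * iteratedDeriv j g x) x := fun j _ =>
        ((hds j).differentiable (by simp) x).mul ((smooth_itd hg j).differentiable (by simp) x)
      rw [deriv_fun_sum hdiff]
      have hterm : ∀ j ∈ Finset.range (m+1),
          deriv (fun x => d j x * iteratedDeriv j g x) x
            = deriv (d j) x * iteratedDeriv j g x + d j x * iteratedDeriv (j+1) g x := by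
        intro j _
        rw [deriv_fun_mul ((hds j).differentiable (by simp) x)
          ((smooth_itd hg j).differentiable (by simp) x), hb j x]
      rw [Finset.sum_congr rfl hterm, Finset.sum_add_distrib]
      -- target sum
      have htarget : ∑ j ∈ Finset.range (m+2),
            (deriv (d j) x + (if j = 0 then 0 else d (j-1) x)) * iteratedDeriv j g x
          = (∑ j ∈ Finset.range (m+2), deriv (d j) x * iteratedDeriv j g x)
            + ∑ j ∈ Finset.range (m+2),
                (if j = 0 then 0 else d (j-1) x) * iteratedDeriv j g x := by
        rw [← Finset.sum_add_distrib]; exact Finset.sum_congr rfl fun j _ => by ring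
      rw [show m + 1 + 1 = m + 2 from rfl, htarget]
      congr 1
      · -- first sums: extend range by one using deriv (d (m+1)) = 0
        rw [Finset.sum_range_succ (fun j => deriv (d j) x * iteratedDeriv j g x) (m+1)]
        have : deriv (d (m+1)) x = 0 := by
          rw [hd0 (m+1) (Nat.lt_succ_self m)]
          exact deriv_const x 0
        rw [this]; ring
      · -- second sums: shift index
        rw [Finset.sum_range_succ' (fun j => (if j = 0 then 0 else d (j-1) x)
          * iteratedDeriv j g x) (m+1)]
        simp

private noncomputable def Lop (n : ℕ) (c : Fin n → ℝ → ℂ) (g : ℝ → ℂ) : ℝ → ℂ :=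
  fun y => iteratedDeriv n g y + ∑ i : Fin n, c i y * iteratedDeriv (n - 1 - (i : ℕ)) g y

private noncomputable def Hop (q : ℝ → ℂ) (g : ℝ → ℂ) : ℝ → ℂ :=
  fun y => -(iteratedDeriv 2 g y) + q y * g y

private lemma smooth_Lop {n : ℕ} {c : Fin n → ℝ → ℂ} (hc : ∀ i, ContDiff ℝ ∞ (c i))
    {g : ℝ → ℂ} (hg : ContDiff ℝ ∞ g) : ContDiff ℝ ∞ (Lop n c g) :=
  (smooth_itd hg n).add (ContDiff.sum fun i _ => (hc i).mul (smooth_itd hg _))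

private lemma smooth_Hop {q : ℝ → ℂ} (hq : ContDiff ℝ ∞ q) {g : ℝ → ℂ}
    (hg : ContDiff ℝ ∞ g) : ContDiff ℝ ∞ (Hop q g) :=
  ((smooth_itd hg 2).neg).add (hq.mul hg)

private lemma Lop_add {n : ℕ} (c : Fin n → ℝ → ℂ)
    {g h : ℝ → ℂ} (hg : ContDiff ℝ ∞ g) (hh : ContDiff ℝ ∞ h) (y : ℝ) :
    Lop n c (fun z => g z + h z) y = Lop n c g y + Lop n c h y := by
  unfold Lop
  rw [itd_add hg hh n y]
  have : ∀ i : Fin n, c i y * iteratedDeriv (n - 1 - (i : ℕ)) (fun z => g z + h z) y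
      = c i y * iteratedDeriv (n - 1 - (i : ℕ)) g y
        + c i y * iteratedDeriv (n - 1 - (i : ℕ)) h y := by
    intro i; rw [itd_add hg hh _ y]; ring
  rw [Finset.sum_congr rfl fun i _ => this i, Finset.sum_add_distrib]
  ring

private lemma Hop_add (q : ℝ → ℂ) {g h : ℝ → ℂ}
    (hg : ContDiff ℝ ∞ g) (hh : ContDiff ℝ ∞ h) (y : ℝ) :
    Hop q (fun z => g z + h z) y = Hop q g y + Hop q h y := by
  unfold Hop
  rw [itd_add hg hh 2 y]
  ring

private lemma LHS_add {n : ℕ} (hn : 0 < n) (q : ℝ → ℂ) (c : Fin n → ℝ → ℂ)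
    (hc : ∀ i, ContDiff ℝ ∞ (c i))
    {g h : ℝ → ℂ} (hg : ContDiff ℝ ∞ g) (hh : ContDiff ℝ ∞ h) (x : ℝ) :
    -(iteratedDeriv 2 (Lop n c (fun z => g z + h z)) x)
        + (q x + 2 * deriv (c ⟨0, hn⟩) x) * Lop n c (fun z => g z + h z) x
      = (-(iteratedDeriv 2 (Lop n c g) x)
          + (q x + 2 * deriv (c ⟨0, hn⟩) x) * Lop n c g x)
        + (-(iteratedDeriv 2 (Lop n c h) x)
          + (q x + 2 * deriv (c ⟨0, hn⟩) x) * Lop n c h x) := by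
  have h1 : Lop n c (fun z => g z + h z) = fun y => Lop n c g y + Lop n c h y :=
    funext fun y => Lop_add c hg hh y
  rw [h1, itd_add (smooth_Lop hc hg) (smooth_Lop hc hh) 2 x]
  have h2 : Lop n c g x + Lop n c h x = (fun y => Lop n c g y + Lop n c h y) x := rfl
  ring

private lemma RHS_add {n : ℕ} (q : ℝ → ℂ) (hq : ContDiff ℝ ∞ q) (c : Fin n → ℝ → ℂ)
    {g h : ℝ → ℂ} (hg : ContDiff ℝ ∞ g) (hh : ContDiff ℝ ∞ h) (x : ℝ) :
    Lop n c (Hop q (fun z => g z + h z)) x = Lop n c (Hop q g) x + Lop n c (Hop q h) x := by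
  have h1 : Hop q (fun z => g z + h z) = fun y => Hop q g y + Hop q h y :=
    funext fun y => Hop_add q hg hh y
  rw [h1, Lop_add c (smooth_Hop hq hg) (smooth_Hop hq hh) x]

private lemma key_vanish {n : ℕ} (hn : 0 < n) (q : ℝ → ℂ) (hq : ContDiff ℝ ∞ q)
    (c : Fin n → ℝ → ℂ) (hc : ∀ i, ContDiff ℝ ∞ (c i))
    (g : ℝ → ℂ) (hg : ContDiff ℝ ∞ g) (x : ℝ)
    (hjet : ∀ k, k < n → iteratedDeriv k g x = 0) :
    -(iteratedDeriv 2 (Lop n c g) x) + (q x + 2 * deriv (c ⟨0, hn⟩) x) * Lop n c g x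
      = Lop n c (Hop q g) x := by
  have hqg_low : ∀ m, m < n → iteratedDeriv m (fun y => q y * g y) x = 0 := by
    intro m hm
    obtain ⟨d, -, -, -, hs⟩ := leibniz_exists q hq m
    rw [hs g hg x]
    refine Finset.sum_eq_zero fun j hj => ?_
    rw [hjet j (by simp only [Finset.mem_range] at hj; omega), mul_zero]
  have hqg_n : iteratedDeriv n (fun y => q y * g y) x = q x * iteratedDeriv n g x := by
    obtain ⟨d, -, hdm, -, hs⟩ := leibniz_exists q hq n
    rw [hs g hg x, Finset.sum_eq_single_of_mem n (Finset.self_mem_range_succ n)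
      (fun j hj hne => by
        rw [hjet j (by simp only [Finset.mem_range] at hj; omega), mul_zero]), hdm]
  have hsum_smooth : ContDiff ℝ ∞
      (fun y => ∑ i : Fin n, c i y * iteratedDeriv (n - 1 - (i : ℕ)) g y) :=
    ContDiff.sum fun i _ => (hc i).mul (smooth_itd hg _)
  have e1 : iteratedDeriv 2 (Lop n c g) x
      = iteratedDeriv (n+2) g x
        + ((∑ i : Fin n, iteratedDeriv 2 (c i) x * iteratedDeriv (n - 1 - (i : ℕ)) g x)
          + (∑ i : Fin n, 2 * deriv (c i) x * iteratedDeriv (n - 1 - (i : ℕ) + 1) g x)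
          + (∑ i : Fin n, c i x * iteratedDeriv (n - 1 - (i : ℕ) + 2) g x)) := by
    calc iteratedDeriv 2 (Lop n c g) x
        = iteratedDeriv 2 (iteratedDeriv n g) x
          + iteratedDeriv 2 (fun y => ∑ i : Fin n,
              c i y * iteratedDeriv (n - 1 - (i : ℕ)) g y) x :=
          itd_add (smooth_itd hg n) hsum_smooth 2 x
      _ = iteratedDeriv (n+2) g x + ∑ i : Fin n,
            iteratedDeriv 2 (fun y => c i y * iteratedDeriv (n - 1 - (i : ℕ)) g y) x := by
          rw [itd_itd g 2 n]
          congr 1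
          exact itd_sum Finset.univ _ (fun i _ => (hc i).mul (smooth_itd hg _)) 2 x
      _ = iteratedDeriv (n+2) g x + ∑ i : Fin n,
            (iteratedDeriv 2 (c i) x * iteratedDeriv (n - 1 - (i : ℕ)) g x
              + 2 * deriv (c i) x * iteratedDeriv (n - 1 - (i : ℕ) + 1) g x
              + c i x * iteratedDeriv (n - 1 - (i : ℕ) + 2) g x) := by
          congr 1
          refine Finset.sum_congr rfl fun i _ => ?_
          rw [itd2_mul (hc i) (smooth_itd hg _) x, itd_itd g 2 (n - 1 - (i : ℕ)),
            ← iteratedDeriv_succ]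
      _ = _ := by rw [Finset.sum_add_distrib, Finset.sum_add_distrib]
  have e2 : Lop n c g x = iteratedDeriv n g x := by
    have h : ∑ i : Fin n, c i x * iteratedDeriv (n - 1 - (i : ℕ)) g x = 0 :=
      Finset.sum_eq_zero fun i _ => by rw [hjet _ (by omega), mul_zero]
    show iteratedDeriv n g x + ∑ i : Fin n, c i x * iteratedDeriv (n - 1 - (i : ℕ)) g x = _
    rw [h, add_zero]
  have e3 : ∀ m, iteratedDeriv m (Hop q g) x
      = -(iteratedDeriv (m+2) g x) + iteratedDeriv m (fun y => q y * g y) x := by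
    intro m
    have h0 : iteratedDeriv m (Hop q g) x
        = iteratedDeriv m (fun y => -(iteratedDeriv 2 g y)) x
          + iteratedDeriv m (fun y => q y * g y) x :=
      itd_add ((smooth_itd hg 2).neg) (hq.mul hg) m x
    have h1 : iteratedDeriv m (iteratedDeriv 2 g) = iteratedDeriv (m+2) g := by
      rw [itd_itd g m 2, Nat.add_comm]
    rw [h0, itd_neg (iteratedDeriv 2 g) m x, h1]
  have e4 : Lop n c (Hop q g) x
      = (-(iteratedDeriv (n+2) g x) + q x * iteratedDeriv n g x)
        + ∑ i : Fin n, c i x * (-(iteratedDeriv (n - 1 - (i : ℕ) + 2) g x)) := by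
    show iteratedDeriv n (Hop q g) x
        + ∑ i : Fin n, c i x * iteratedDeriv (n - 1 - (i : ℕ)) (Hop q g) x = _
    rw [e3 n, hqg_n]
    congr 1
    refine Finset.sum_congr rfl fun i _ => ?_
    rw [e3 (n - 1 - (i : ℕ)), hqg_low _ (by omega), add_zero]
  have hz1 : ∑ i : Fin n, iteratedDeriv 2 (c i) x * iteratedDeriv (n - 1 - (i : ℕ)) g x = 0 :=
    Finset.sum_eq_zero fun i _ => by rw [hjet _ (by omega), mul_zero]
  have hz2 : ∑ i : Fin n, 2 * deriv (c i) x * iteratedDeriv (n - 1 - (i : ℕ) + 1) g x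
      = 2 * deriv (c ⟨0, hn⟩) x * iteratedDeriv n g x := by
    rw [Finset.sum_eq_single_of_mem ⟨0, hn⟩ (Finset.mem_univ _) (fun i _ hne => by
      have hi : 0 < (i : ℕ) := Nat.pos_of_ne_zero (fun h => hne (Fin.ext h))
      have hilt := i.isLt
      rw [hjet _ (by omega), mul_zero])]
    have h : n - 1 - ((⟨0, hn⟩ : Fin n) : ℕ) + 1 = n := by simp; omega
    rw [h]
  have e5 : ∑ i : Fin n, c i x * (-(iteratedDeriv (n - 1 - (i : ℕ) + 2) g x))
      = -∑ i : Fin n, c i x * iteratedDeriv (n - 1 - (i : ℕ) + 2) g x := by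
    simp [mul_neg]
  rw [e1, e2, e4, e5, hz1, hz2]
  ring

private lemma key_mem {n : ℕ} (hn : 0 < n) (q : ℝ → ℂ) (c : Fin n → ℝ → ℂ)
    (U : Submodule ℂ (ℝ → ℂ))
    (hUinv : ∀ u ∈ U, (fun x => -(iteratedDeriv 2 u x) + q x * u x) ∈ U)
    (hann : ∀ u ∈ U, ∀ x,
      iteratedDeriv n u x + ∑ i : Fin n, c i x * iteratedDeriv (n - 1 - (i : ℕ)) u x = 0)
    (u : ℝ → ℂ) (hu : u ∈ U) (x : ℝ) :
    -(iteratedDeriv 2 (Lop n c u) x) + (q x + 2 * deriv (c ⟨0, hn⟩) x) * Lop n c u x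
      = Lop n c (Hop q u) x := by
  have h1 : Lop n c u = fun _ => (0 : ℂ) := funext fun y => hann u hu y
  have h2 : Lop n c (Hop q u) x = 0 := hann _ (hUinv u hu) x
  rw [h1, h2, itd_zero_fun 2]
  simp

private noncomputable def clampI (a b t : ℝ) : ℝ := max a (min b t)

private noncomputable def vf (n : ℕ) (c : Fin n → ℝ → ℂ) (a b : ℝ) (t : ℝ)
    (y : Fin n → ℂ) : Fin n → ℂ :=
  fun k => if h : (k : ℕ) + 1 < n then y ⟨(k : ℕ) + 1, h⟩
    else -∑ i : Fin n, c i (clampI a b t) * y ⟨n - 1 - (i : ℕ), by have := i.pos; omega⟩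

private lemma jet_zero {n : ℕ} (hn : 0 < n) (c : Fin n → ℝ → ℂ) (hc : ∀ i, ContDiff ℝ ∞ (c i))
    (u : ℝ → ℂ) (hu : ContDiff ℝ ∞ u)
    (hann : ∀ x, iteratedDeriv n u x
      + ∑ i : Fin n, c i x * iteratedDeriv (n - 1 - (i : ℕ)) u x = 0)
    (x₀ : ℝ) (hjet : ∀ k, k < n → iteratedDeriv k u x₀ = 0) (p : ℝ) : u p = 0 := by
  set a : ℝ := min x₀ p - 1 with ha
  set b : ℝ := max x₀ p + 1 with hb
  have hax : a < x₀ := by have := min_le_left x₀ p; simp only [ha]; linarith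
  have hxb : x₀ < b := by have := le_max_left x₀ p; simp only [hb]; linarith
  have hab : a < b := hax.trans hxb
  have hpa : a ≤ p := by have := min_le_right x₀ p; simp only [ha]; linarith
  have hpb : p ≤ b := by have := le_max_right x₀ p; simp only [hb]; linarith
  have hclamp_mem : ∀ t, clampI a b t ∈ Icc a b := fun t =>
    ⟨le_max_left _ _, max_le hab.le (min_le_left _ _)⟩
  have hclamp_eq : ∀ t ∈ Icc a b, clampI a b t = t := fun t ht => by
    have h1 : min b t = t := min_eq_right ht.2
    simp only [clampI, h1]; exact max_eq_right ht.1
  -- bound for Lipschitz constant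
  obtain ⟨C, hC⟩ : ∃ C, ∀ t ∈ Icc a b, ‖∑ i : Fin n, ‖c i t‖‖ ≤ C :=
    IsCompact.exists_bound_of_continuousOn isCompact_Icc
      (Continuous.continuousOn (by
        exact continuous_finset_sum _ fun i _ => ((hc i).continuous).norm))
  have hC' : ∀ t ∈ Icc a b, ∑ i : Fin n, ‖c i t‖ ≤ C := fun t ht =>
    (le_abs_self _).trans (by simpa [Real.norm_eq_abs] using hC t ht)
  set K : NNReal := (max 1 C).toNNReal with hK
  have hK1 : (1 : ℝ) ≤ (K : ℝ) := by
    rw [hK, Real.coe_toNNReal _ (le_trans zero_le_one (le_max_left 1 C))]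
    exact le_max_left 1 C
  have hKC : C ≤ (K : ℝ) := by
    rw [hK, Real.coe_toNNReal _ (le_trans zero_le_one (le_max_left 1 C))]
    exact le_max_right 1 C
  -- Lipschitz
  have hlip : ∀ t, LipschitzWith K (vf n c a b t) := by
    intro t
    apply LipschitzWith.of_dist_le_mul
    intro y z
    rw [dist_pi_le_iff (by positivity)]
    intro k
    by_cases h : (k : ℕ) + 1 < n
    · simp only [vf, dif_pos h]
      calc dist (y ⟨(k:ℕ)+1, h⟩) (z ⟨(k:ℕ)+1, h⟩) ≤ dist y z := dist_le_pi_dist y z _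
        _ ≤ K * dist y z := by nlinarith [dist_nonneg (x := y) (y := z)]
    · simp only [vf, dif_neg h]
      rw [dist_neg_neg, dist_eq_norm, ← Finset.sum_sub_distrib]
      have step : ∀ i : Fin n,
          ‖c i (clampI a b t) * y ⟨n - 1 - (i:ℕ), by have := i.pos; omega⟩
            - c i (clampI a b t) * z ⟨n - 1 - (i:ℕ), by have := i.pos; omega⟩‖
          ≤ ‖c i (clampI a b t)‖ * dist y z := by
        intro i
        rw [← mul_sub, norm_mul]
        exact mul_le_mul_of_nonneg_left
          (by rw [← dist_eq_norm]; exact dist_le_pi_dist y z _) (norm_nonneg _)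
      calc ‖∑ i : Fin n, (c i (clampI a b t) * y ⟨n - 1 - (i:ℕ), by have := i.pos; omega⟩
              - c i (clampI a b t) * z ⟨n - 1 - (i:ℕ), by have := i.pos; omega⟩)‖
          ≤ ∑ i : Fin n, ‖c i (clampI a b t) * y ⟨n - 1 - (i:ℕ), by have := i.pos; omega⟩
              - c i (clampI a b t) * z ⟨n - 1 - (i:ℕ), by have := i.pos; omega⟩‖ :=
            norm_sum_le _ _
        _ ≤ ∑ i : Fin n, ‖c i (clampI a b t)‖ * dist y z :=
            Finset.sum_le_sum fun i _ => step i
        _ = (∑ i : Fin n, ‖c i (clampI a b t)‖) * dist y z := by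
            rw [Finset.sum_mul]
        _ ≤ C * dist y z := by
            have := hC' _ (hclamp_mem t)
            exact mul_le_mul_of_nonneg_right this dist_nonneg
        _ ≤ K * dist y z := mul_le_mul_of_nonneg_right hKC dist_nonneg
  -- the two solutions
  set F : ℝ → (Fin n → ℂ) := fun t k => iteratedDeriv (k : ℕ) u t with hF
  have hF' : ∀ t ∈ Ioo a b, HasDerivAt F (vf n c a b t (F t)) t := by
    intro t ht
    rw [hasDerivAt_pi]
    intro k
    have hder : HasDerivAt (fun s => iteratedDeriv (k : ℕ) u s)
        (iteratedDeriv ((k : ℕ) + 1) u t) t := by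
      have hd := ((smooth_itd hu k).differentiable (by simp) t).hasDerivAt
      rwa [show deriv (iteratedDeriv (k:ℕ) u) t = iteratedDeriv ((k:ℕ)+1) u t from by
        rw [iteratedDeriv_succ]] at hd
    by_cases h : (k : ℕ) + 1 < n
    · have hv : vf n c a b t (F t) k = iteratedDeriv ((k : ℕ) + 1) u t := by
        simp only [vf, dif_pos h, hF]
      rw [hv]; exact hder
    · have hk : (k : ℕ) + 1 = n := by have := k.isLt; omega
      have hv : vf n c a b t (F t) k = iteratedDeriv n u t := by
        simp only [vf, dif_neg h, hF]
        rw [hclamp_eq t (Ioo_subset_Icc_self ht)]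
        have hh := hann t
        linear_combination -hh
      rw [hv, ← hk]; exact hder
  have hG' : ∀ t ∈ Ioo a b, HasDerivAt (fun _ : ℝ => (0 : Fin n → ℂ))
      (vf n c a b t ((fun _ : ℝ => (0 : Fin n → ℂ)) t)) t := by
    intro t ht
    have hv : vf n c a b t (0 : Fin n → ℂ) = 0 := by
      funext k
      by_cases h : (k : ℕ) + 1 < n
      · simp [vf, dif_pos h]
      · simp [vf, dif_neg h]
    simpa [hv] using hasDerivAt_const t (0 : Fin n → ℂ)
  have heqOn : EqOn F (fun _ : ℝ => (0 : Fin n → ℂ)) (Icc a b) :=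
    ODE_solution_unique_of_mem_Icc (s := fun _ => (univ : Set (Fin n → ℂ)))
      (fun t _ => (hlip t).lipschitzOnWith) ⟨hax, hxb⟩
      (Continuous.continuousOn (continuous_pi fun k => (smooth_itd hu _).continuous))
      hF' (fun _ _ => mem_univ _)
      continuousOn_const hG' (fun _ _ => mem_univ _)
      (funext fun k => hjet (k : ℕ) k.isLt)
  have hFp := congrFun (heqOn ⟨hpa, hpb⟩) ⟨0, hn⟩
  simpa [hF] using hFp


/-- Darboux–Crum transformation: let `H f = -f'' + q·f`, let `U` be an `n`-dimensional
`H`-invariant subspace of smooth functions, and let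
`L = (d/dx)ⁿ + c₁(x)(d/dx)^{n-1} + ⋯ + cₙ(x)` be a monic `n`-th order operator
annihilating every element of `U`. Then with `H̃ f = -f'' + (q + 2c₁')·f` one has
`H̃ ∘ L = L ∘ H` on smooth functions. -/
theorem darboux_crum_intertwining
    (n : ℕ) (hn : 0 < n) (q : ℝ → ℂ) (hq : ContDiff ℝ (⊤ : ℕ∞) q)
    (U : Submodule ℂ (ℝ → ℂ))
    (hdim : Module.finrank ℂ U = n)
    (hUsmooth : ∀ u ∈ U, ContDiff ℝ (⊤ : ℕ∞) u)
    (hUinv : ∀ u ∈ U, (fun x => -(iteratedDeriv 2 u x) + q x * u x) ∈ U)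
    (c : Fin n → ℝ → ℂ) (hc : ∀ i, ContDiff ℝ (⊤ : ℕ∞) (c i))
    (hann : ∀ u ∈ U, ∀ x,
      iteratedDeriv n u x + ∑ i : Fin n, c i x * iteratedDeriv (n - 1 - (i : ℕ)) u x = 0)
    (f : ℝ → ℂ) (hf : ContDiff ℝ (⊤ : ℕ∞) f) :
    ∀ x, -(iteratedDeriv 2
            (fun y => iteratedDeriv n f y
              + ∑ i : Fin n, c i y * iteratedDeriv (n - 1 - (i : ℕ)) f y) x)
        + (q x + 2 * deriv (c ⟨0, hn⟩) x)
          * (iteratedDeriv n f x + ∑ i : Fin n, c i x * iteratedDeriv (n - 1 - (i : ℕ)) f x)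
      = iteratedDeriv n (fun y => -(iteratedDeriv 2 f y) + q y * f y) x
        + ∑ i : Fin n, c i x
          * iteratedDeriv (n - 1 - (i : ℕ)) (fun y => -(iteratedDeriv 2 f y) + q y * f y) x := by
  intro x
  have hq' : ContDiff ℝ ∞ q := hq.of_le (by simp)
  have hf' : ContDiff ℝ ∞ f := hf.of_le (by simp)
  have hc' : ∀ i, ContDiff ℝ ∞ (c i) := fun i => (hc i).of_le (by simp)
  have hU' : ∀ u ∈ U, ContDiff ℝ ∞ u := fun u hu => (hUsmooth u hu).of_le (by simp)
  have hfin : FiniteDimensional ℂ U := FiniteDimensional.of_finrank_pos (by rw [hdim]; exact hn)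
  let J : U →ₗ[ℂ] (Fin n → ℂ) :=
    { toFun := fun u => fun k => iteratedDeriv (k : ℕ) (u : ℝ → ℂ) x
      map_add' := fun u v => funext fun k => itd_add (hU' u u.2) (hU' v v.2) (k : ℕ) x
      map_smul' := fun a u => funext fun k => itd_smul (hU' u u.2) a (k : ℕ) x }
  have hinj : Function.Injective J := by
    rw [← LinearMap.ker_eq_bot, Submodule.eq_bot_iff]
    intro u hu0
    have h0 : ∀ k : ℕ, k < n → iteratedDeriv k (u : ℝ → ℂ) x = 0 := by
      intro k hk
      exact congrFun (LinearMap.mem_ker.mp hu0) ⟨k, hk⟩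
    have hz := jet_zero hn c hc' (u : ℝ → ℂ) (hU' u u.2) (hann u u.2) x h0
    exact Subtype.ext (funext fun p => hz p)
  have hsurj : Function.Surjective J :=
    (LinearMap.injective_iff_surjective_of_finrank_eq_finrank
      (by rw [hdim, Module.finrank_fin_fun])).mp hinj
  obtain ⟨u, hu⟩ := hsurj (fun k : Fin n => iteratedDeriv (k : ℕ) f x)
  set g : ℝ → ℂ := fun y => f y - (u : ℝ → ℂ) y with hgdef
  have hg' : ContDiff ℝ ∞ g := hf'.sub (hU' u u.2)
  have hgjet : ∀ k, k < n → iteratedDeriv k g x = 0 := by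
    intro k hk
    have h1 : iteratedDeriv k g x = iteratedDeriv k f x - iteratedDeriv k (u : ℝ → ℂ) x :=
      itd_sub hf' (hU' u u.2) k x
    have h2 : iteratedDeriv k (u : ℝ → ℂ) x = iteratedDeriv k f x := congrFun hu ⟨k, hk⟩
    rw [h1, h2, sub_self]
  have hdecomp : (fun y => (u : ℝ → ℂ) y + g y) = f := funext fun y => by
    simp [hgdef]
  show -(iteratedDeriv 2 (Lop n c f) x) + (q x + 2 * deriv (c ⟨0, hn⟩) x) * Lop n c f x
      = Lop n c (Hop q f) x
  rw [← hdecomp]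
  rw [LHS_add hn q c hc' (hU' u u.2) hg' x, RHS_add q hq' c (hU' u u.2) hg' x]
  rw [key_mem hn q c U hUinv hann (u : ℝ → ℂ) u.2 x,
    key_vanish hn q hq' c hc' g hg' x hgjet]
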